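/- Let G be a connected graph with maximum degree at most 4, not the octahedron. If T and T' are inner triangles with T ∩ T' = {x,y}, then N(x) induces a 4-cycle, the only ear of Q_T that is an inner triangle is T', and the only normal vertices of T are x and y. -/

import Mathlib

universe u

variable {V : Type u}

/-- A clique of `G` in the sense of the paper: a maximal complete subgraph,
represented as a finset of vertices. -/
def MaxClique (G : SimpleGraph V) (s : Finset V) : Prop :=
  G.IsClique (s : Set V) ∧ ∀ t : Finset V, G.IsClique (t : Set V) → s ⊆ t → s = t

/-- A pairwise-intersecting family of finsets. -/
def PairwiseIntersecting (Q : Set (Finset V)) : Prop :=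
  ∀ q ∈ Q, ∀ r ∈ Q, ∃ v, v ∈ q ∧ v ∈ r

/-- A clique of the clique graph `K(G)`: a maximal pairwise-intersecting family of
cliques of `G`. -/
def IsCliqueOfCliques (G : SimpleGraph V) (Q : Set (Finset V)) : Prop :=
  (∀ q ∈ Q, MaxClique G q) ∧ PairwiseIntersecting Q ∧
    ∀ Q' : Set (Finset V), Q ⊆ Q' → (∀ q ∈ Q', MaxClique G q) →
      PairwiseIntersecting Q' → Q' = Q

/-- A necktie: a clique of `K(G)` with empty total intersection. -/
def IsNecktie (G : SimpleGraph V) (Q : Set (Finset V)) : Prop :=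
  IsCliqueOfCliques G Q ∧ ¬ ∃ v, ∀ q ∈ Q, v ∈ q

/-- The star of a vertex: the family of cliques of `G` containing it. -/
def starOf (G : SimpleGraph V) (x : V) : Set (Finset V) :=
  {q | MaxClique G q ∧ x ∈ q}

/-- A vertex is normal when its star is a clique of `K(G)`. -/
def IsNormal (G : SimpleGraph V) (x : V) : Prop :=
  IsCliqueOfCliques G (starOf G x)

/-- A triangle: a complete subgraph with three vertices. -/
def IsTriangle (G : SimpleGraph V) (T : Finset V) : Prop :=
  G.IsClique (T : Set V) ∧ T.card = 3

/-- An inner triangle: a triangle that is a clique and such that each of its edges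
lies in a triangle different from `T`. -/
def IsInnerTriangle [DecidableEq V] (G : SimpleGraph V) (T : Finset V) : Prop :=
  MaxClique G T ∧ T.card = 3 ∧
    ∀ x ∈ T, ∀ y ∈ T, x ≠ y →
      ∃ T' : Finset V, IsTriangle G T' ∧ T' ≠ T ∧ T ∩ T' = ({x, y} : Finset V)

/-- `Q_T`: the family of cliques meeting the triangle `T` in at least two vertices. -/
def QT [DecidableEq V] (G : SimpleGraph V) (T : Finset V) : Set (Finset V) :=
  {q | MaxClique G q ∧ 2 ≤ (q ∩ T).card}

/-- Adjacency between two vertices of `K²(G)` (i.e. cliques of `K(G)`):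
they are distinct and intersect. -/
def Adj2 (A B : Set (Finset V)) : Prop :=
  A ≠ B ∧ ∃ q, q ∈ A ∧ q ∈ B

/-- `s` induces a 4-cycle in `G`. -/
def InducesC4 [DecidableEq V] (G : SimpleGraph V) (s : Finset V) : Prop :=
  ∃ a b c d : V, a ≠ b ∧ a ≠ c ∧ a ≠ d ∧ b ≠ c ∧ b ≠ d ∧ c ≠ d ∧
    s = ({a, b, c, d} : Finset V) ∧
    G.Adj a b ∧ G.Adj b c ∧ G.Adj c d ∧ G.Adj d a ∧ ¬ G.Adj a c ∧ ¬ G.Adj b d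

/-- The octahedron, i.e. the complete tripartite graph `K_{2,2,2}`. -/
def octahedron : SimpleGraph (Fin 3 × Fin 2) where
  Adj a b := a.1 ≠ b.1
  symm := ⟨fun _ _ h => h.symm⟩
  loopless := ⟨fun _ h => h rfl⟩

/-- The clique graph `K(G)`: the intersection graph of the cliques of `G`. -/
def cliqueGraph (G : SimpleGraph V) : SimpleGraph {q : Finset V // MaxClique G q} where
  Adj q r := q ≠ r ∧ ∃ v, v ∈ q.1 ∧ v ∈ r.1
  symm := ⟨fun _ _ (h : _ ∧ _) => ⟨h.1.symm, h.2.imp fun _ hv => ⟨hv.2, hv.1⟩⟩⟩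
  loopless := ⟨fun _ (h : _ ∧ _) => h.1 rfl⟩

/-- A graph is clique-Helly when its family of cliques has the Helly property. -/
def CliqueHelly {W : Type*} (H : SimpleGraph W) : Prop :=
  ∀ F : Set (Finset W), F.Nonempty → (∀ q ∈ F, MaxClique H q) →
    PairwiseIntersecting F → ∃ v, ∀ q ∈ F, v ∈ q

/-- Hereditary clique-Helly: every induced subgraph is clique-Helly. -/
def HereditaryCliqueHelly {W : Type*} (H : SimpleGraph W) : Prop :=
  ∀ s : Set W, CliqueHelly (SimpleGraph.induce s H)

/-- A finite graph packaged with its vertex type, to allow iterating `K`. -/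
structure FGraph where
  V : Type u
  fin : Fintype V
  G : SimpleGraph V

/-- The clique graph operator on packaged finite graphs. -/
noncomputable def FGraph.K (F : FGraph) : FGraph where
  V := {q : Finset F.V // MaxClique F.G q}
  fin := by
    haveI := F.fin
    classical
    exact Subtype.fintype _
  G := cliqueGraph F.G

/-- Iterated clique graphs: `iterK F n` packages `Kⁿ(G)`. -/
noncomputable def iterK (F : FGraph) : ℕ → FGraph
  | 0 => F
  | n + 1 => (iterK F n).K

/-!
Write `T = {x, y, z}` and `T' = {x, y, w}`. Maximality of `T` gives `z ≁ w`; the edges `xz` and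
`yz` of `T` lie in further triangles `xzu` and `yzv`, and since degrees are at most 4,
`N(x) = {y, z, w, u}` and `N(y) = {x, z, w, v}`. Innerness of `T'` then forces `u ~ w` and
`v ~ w`, and `N(z) = {x, y, u, v}`. Were `u ~ v`, these six vertices would span a 4-regular,
hence whole, component isomorphic to the octahedron. So the six vertices form an octahedron minus
the edge `uv`, and everything is read off this picture: `N(x)` is the 4-cycle `zywu`; the ears
`xzu`, `yzv` are not inner because `zu`, `zv` lie in no other triangle; `x` (and likewise `y`)
is normal because a clique meeting all four cliques at `x` without containing `x` would contain
`z, w` or `y, u`; and `z` is not normal because `T'` meets every clique at `z`.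
-/

namespace SimpleGraph

theorem Connected.eq_univ_of_adj_closed {G : SimpleGraph V} (hG : G.Connected) {s : Set V}
    {a : V} (ha : a ∈ s) (hs : ∀ ⦃b c⦄, G.Adj b c → b ∈ s → c ∈ s) : s = Set.univ := by
  refine Set.eq_univ_of_forall fun t => ?_
  induction (G.reachable_iff_reflTransGen a t).1 (hG.preconnected a t) with
  | refl => exact ha
  | tail _ hbc ih => exact hs hbc ih

theorem Hom.nonempty_iso_of_injective {W : Type*} [Fintype W] [Nonempty W] [Fintype V]
    {H : SimpleGraph W} {G : SimpleGraph V} [DecidableRel H.Adj] [DecidableRel G.Adj]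
    (hG : G.Connected) (f : H →g G) (hf : Function.Injective f)
    (hdeg : ∀ p, G.degree (f p) ≤ H.degree p) : Nonempty (H ≃g G) := by
  classical
  have hN : ∀ p, (H.neighborFinset p).map ⟨f, hf⟩ = G.neighborFinset (f p) := fun p =>
    Finset.eq_of_subset_of_card_le
      (fun t ht => by
        obtain ⟨q, hq, rfl⟩ := Finset.mem_map.1 ht
        exact (G.mem_neighborFinset _ _).2 (f.map_adj ((H.mem_neighborFinset _ _).1 hq)))
      (by simpa using hdeg p)
  have hreflect : ∀ p t, G.Adj (f p) t → ∃ q, H.Adj p q ∧ f q = t := fun p t h => by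
    have ht := (G.mem_neighborFinset _ _).2 h
    rw [← hN p, Finset.mem_map] at ht
    simpa using ht
  have hsurj : Function.Surjective f := by
    obtain ⟨p⟩ := ‹Nonempty W›
    refine Set.range_eq_univ.1 (hG.eq_univ_of_adj_closed (Set.mem_range_self p) ?_)
    rintro - t h ⟨q, rfl⟩
    obtain ⟨r, -, rfl⟩ := hreflect q t h
    exact Set.mem_range_self r
  refine ⟨⟨Equiv.ofBijective f ⟨hf, hsurj⟩, fun {p q} => ⟨fun h => ?_, f.map_adj⟩⟩⟩
  obtain ⟨r, hr, hrq⟩ := hreflect p _ h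
  exact hf hrq ▸ hr

theorem eq_or_eq_or_eq_or_eq_of_adj [Fintype V] [DecidableEq V] {G : SimpleGraph V}
    [DecidableRel G.Adj] {a b c d e : V} (hdeg : G.degree a ≤ 4)
    (hb : G.Adj a b) (hc : G.Adj a c) (hd : G.Adj a d) (he : G.Adj a e)
    (hbc : b ≠ c) (hbd : b ≠ d) (hbe : b ≠ e) (hcd : c ≠ d) (hce : c ≠ e) (hde : d ≠ e) :
    ∀ t, G.Adj a t → t = b ∨ t = c ∨ t = d ∨ t = e := by
  have hsub : ({b, c, d, e} : Finset V) ⊆ G.neighborFinset a := by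
    simp [Finset.insert_subset_iff, hb, hc, hd, he]
  have hN := Finset.eq_of_subset_of_card_le hsub (by
    rw [card_neighborFinset_eq_degree, Finset.card_eq_four.2 ⟨b, c, d, e, by simp [*]⟩]
    exact hdeg)
  intro t ht
  have hmem := (G.mem_neighborFinset a t).2 ht
  rw [← hN] at hmem
  simpa using hmem

end SimpleGraph

theorem Finset.exists_eq_triple_of_inter_eq [DecidableEq V] {s t : Finset V} {a b : V}
    (hs : s.card = 3) (h : s ∩ t = {a, b}) (hab : a ≠ b) : ∃ c, c ∉ t ∧ s = {a, b, c} := by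
  have hcard : (s \ t).card = 1 := by
    have := Finset.card_sdiff_add_card_inter s t
    rw [h, Finset.card_pair hab, hs] at this
    omega
  obtain ⟨c, hc⟩ := Finset.card_eq_one.1 hcard
  have hct : c ∉ t := (Finset.mem_sdiff.1 (hc ▸ Finset.mem_singleton_self c)).2
  refine ⟨c, hct, ?_⟩
  rw [← Finset.sdiff_union_inter s t, hc, h]
  ext
  simp only [Finset.mem_union, Finset.mem_insert, Finset.mem_singleton]
  tauto

theorem Finset.mem_and_mem_of_two_le_card_inter [DecidableEq V] {q : Finset V} {a b c : V}
    (h : 2 ≤ (q ∩ {a, b, c}).card) :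
    (a ∈ q ∧ b ∈ q) ∨ (a ∈ q ∧ c ∈ q) ∨ (b ∈ q ∧ c ∈ q) := by
  contrapose! h
  refine Nat.lt_succ_of_le (Finset.card_le_one.2 fun s hs t ht => ?_)
  simp only [Finset.mem_inter, Finset.mem_insert, Finset.mem_singleton] at hs ht
  grind

section Cliques

variable {G : SimpleGraph V}

theorem maxClique_iff {s : Finset V} :
    MaxClique G s ↔ G.IsClique (s : Set V) ∧ ∀ v ∉ s, ∃ u ∈ s, ¬ G.Adj v u := by
  classical
  refine ⟨fun h => ⟨h.1, fun v hv => ?_⟩, fun ⟨hc, h⟩ => ⟨hc, fun t ht hst => ?_⟩⟩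
  · by_contra! hadj
    have hins : G.IsClique ((insert v s : Finset V) : Set V) := by
      rw [Finset.coe_insert]
      exact SimpleGraph.isClique_insert.2 ⟨h.1, fun u hu _ => hadj u hu⟩
    exact hv (h.2 _ hins (Finset.subset_insert v s) ▸ Finset.mem_insert_self v s)
  · by_contra hne
    obtain ⟨v, hvt, hvs⟩ := Finset.exists_of_ssubset (hst.ssubset_of_ne hne)
    obtain ⟨u, hus, hnadj⟩ := h v hvs
    exact hnadj (ht hvt (hst hus) (ne_of_mem_of_not_mem hus hvs).symm)

theorem MaxClique.nonempty [Nonempty V] {s : Finset V} (h : MaxClique G s) : s.Nonempty := by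
  obtain ⟨v⟩ := ‹Nonempty V›
  rw [Finset.nonempty_iff_ne_empty]
  rintro rfl
  exact Finset.singleton_ne_empty v (h.2 {v} (by simp) (Finset.empty_subset _)).symm

end Cliques

section Triangles

variable [DecidableEq V] {G : SimpleGraph V}

theorem isClique_triple {a b c : V} (hab : G.Adj a b) (hac : G.Adj a c) (hbc : G.Adj b c) :
    G.IsClique (({a, b, c} : Finset V) : Set V) :=
  (G.is3Clique_triple_iff.2 ⟨hab, hac, hbc⟩).isClique

theorem maxClique_triple {a b c : V} (hab : G.Adj a b) (hac : G.Adj a c) (hbc : G.Adj b c)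
    (h : ∀ t, G.Adj a t → t ≠ b → t ≠ c → ¬ G.Adj t b ∨ ¬ G.Adj t c) :
    MaxClique G {a, b, c} := by
  refine maxClique_iff.2 ⟨isClique_triple hab hac hbc, fun t ht => ?_⟩
  simp only [Finset.mem_insert, Finset.mem_singleton, not_or] at ht
  by_cases hta : G.Adj a t
  · rcases h t hta ht.2.1 ht.2.2 with hb | hc
    · exact ⟨b, by simp, hb⟩
    · exact ⟨c, by simp, hc⟩
  · exact ⟨a, by simp, fun h' => hta h'.symm⟩

theorem MaxClique.not_adj_of_adj_of_adj {a b c d : V} (h : MaxClique G {a, b, c})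
    (hd : d ∉ ({a, b, c} : Finset V)) (ha : G.Adj d a) (hb : G.Adj d b) : ¬ G.Adj d c := by
  obtain ⟨t, ht, hdt⟩ := (maxClique_iff.1 h).2 d hd
  simp only [Finset.mem_insert, Finset.mem_singleton] at ht
  rcases ht with rfl | rfl | rfl
  exacts [(hdt ha).elim, (hdt hb).elim, hdt]

theorem IsInnerTriangle.exists_common_neighbor {T : Finset V} (hT : IsInnerTriangle G T)
    {a b : V} (ha : a ∈ T) (hb : b ∈ T) (hab : a ≠ b) :
    ∃ c ∉ T, G.Adj a c ∧ G.Adj b c := by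
  obtain ⟨S, ⟨hS, hScard⟩, -, hTS⟩ := hT.2.2 a ha b hb hab
  obtain ⟨c, hcT, rfl⟩ :=
    Finset.exists_eq_triple_of_inter_eq hScard (by rw [Finset.inter_comm, hTS]) hab
  exact ⟨c, hcT, hS (by simp) (by simp) (ne_of_mem_of_not_mem ha hcT),
    hS (by simp) (by simp) (ne_of_mem_of_not_mem hb hcT)⟩

theorem IsInnerTriangle.adj_of_forall_adj {x y z w u : V} (hT : IsInnerTriangle G {x, y, w})
    (hwx : w ≠ x) (hzw : ¬ G.Adj z w) (hN : ∀ t, G.Adj x t → t = y ∨ t = z ∨ t = w ∨ t = u) :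
    G.Adj w u := by
  obtain ⟨p, hpT, hxp, hwp⟩ := hT.exists_common_neighbor (a := x) (b := w) (by simp) (by simp)
    hwx.symm
  rcases hN p hxp with rfl | rfl | rfl | rfl
  exacts [(hpT (by simp)).elim, (hzw hwp.symm).elim, (hpT (by simp)).elim, hwp]

end Triangles

theorem isNormal_iff {G : SimpleGraph V} {x : V} :
    IsNormal G x ↔ ∀ q, MaxClique G q → (∀ r, MaxClique G r → x ∈ r → ∃ v, v ∈ q ∧ v ∈ r) →
      x ∈ q := by
  have : Nonempty V := ⟨x⟩
  refine ⟨fun hx q hq hmeet => ?_, fun h => ⟨fun q hq => hq.1, fun q hq r hr => ⟨x, hq.2, hr.2⟩,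
    fun Q hsub hmax hpw => (Set.Subset.antisymm (fun q hq => ⟨hmax q hq, ?_⟩) hsub)⟩⟩
  · suffices insert q (starOf G x) = starOf G x from (this ▸ Set.mem_insert q _).2
    refine hx.2.2 _ (Set.subset_insert q _) ?_ ?_
    · rintro r (rfl | hr)
      exacts [hq, hr.1]
    · rintro r (rfl | hr) s (rfl | hs)
      · obtain ⟨v, hv⟩ := hq.nonempty
        exact ⟨v, hv, hv⟩
      · exact hmeet s hs.1 hs.2
      · obtain ⟨v, hvr, hvs⟩ := hmeet r hr.1 hr.2
        exact ⟨v, hvs, hvr⟩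
      · exact hx.2.1 r hr s hs
  · exact h q (hmax q hq) fun r hr hxr => hpw q hq r (hsub ⟨hr, hxr⟩)

instance : DecidableRel octahedron.Adj := fun a b => inferInstanceAs (Decidable (a.1 ≠ b.1))

theorem octahedron_degree (p : Fin 3 × Fin 2) : octahedron.degree p = 4 := by
  revert p; decide

theorem nonempty_iso_octahedron_of_hom [Fintype V] {G : SimpleGraph V} [DecidableRel G.Adj]
    (hconn : G.Connected) (hdeg : ∀ v, G.degree v ≤ 4) (f : octahedron →g G)
    (hf : ∀ i, f (i, 0) ≠ f (i, 1)) : Nonempty (G ≃g octahedron) := by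
  have hinj : Function.Injective f := by
    rintro ⟨i, a⟩ ⟨j, b⟩ hfab
    by_cases hij : i = j
    · subst hij
      fin_cases a <;> fin_cases b
      exacts [rfl, (hf i hfab).elim, (hf i hfab.symm).elim, rfl]
    · exact ((f.map_adj (show octahedron.Adj (i, a) (j, b) from hij)).ne hfab).elim
  obtain ⟨e⟩ := f.nonempty_iso_of_injective hconn hinj fun p => octahedron_degree p ▸ hdeg _
  exact ⟨e.symm⟩

/-- The local picture around two inner triangles `{x, y, z}` and `{x, y, w}`: the six vertices
span the octahedron with antipodal pairs `{x, v}`, `{y, u}`, `{z, w}` minus the edge `uv`, and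
`x`, `y`, `z` have no further neighbours. -/
structure SharedEdgeConfig (G : SimpleGraph V) (x y z w u v : V) : Prop where
  adj_xy : G.Adj x y
  adj_xz : G.Adj x z
  adj_xw : G.Adj x w
  adj_xu : G.Adj x u
  adj_yz : G.Adj y z
  adj_yw : G.Adj y w
  adj_yv : G.Adj y v
  adj_zu : G.Adj z u
  adj_zv : G.Adj z v
  adj_wu : G.Adj w u
  adj_wv : G.Adj w v
  not_adj_zw : ¬ G.Adj z w
  not_adj_xv : ¬ G.Adj x v
  not_adj_yu : ¬ G.Adj y u
  not_adj_uv : ¬ G.Adj u v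
  ne_zw : z ≠ w
  nbr_x : ∀ t, G.Adj x t → t = y ∨ t = z ∨ t = w ∨ t = u
  nbr_y : ∀ t, G.Adj y t → t = x ∨ t = z ∨ t = w ∨ t = v
  nbr_z : ∀ t, G.Adj z t → t = x ∨ t = y ∨ t = u ∨ t = v

namespace SharedEdgeConfig

variable {G : SimpleGraph V} {x y z w u v : V}

theorem symm (c : SharedEdgeConfig G x y z w u v) : SharedEdgeConfig G y x z w v u where
  adj_xy := c.adj_xy.symm
  adj_xz := c.adj_yz
  adj_xw := c.adj_yw
  adj_xu := c.adj_yv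
  adj_yz := c.adj_xz
  adj_yw := c.adj_xw
  adj_yv := c.adj_xu
  adj_zu := c.adj_zv
  adj_zv := c.adj_zu
  adj_wu := c.adj_wv
  adj_wv := c.adj_wu
  not_adj_zw := c.not_adj_zw
  not_adj_xv := c.not_adj_yu
  not_adj_yu := c.not_adj_xv
  not_adj_uv := fun h => c.not_adj_uv h.symm
  ne_zw := c.ne_zw
  nbr_x := c.nbr_y
  nbr_y := c.nbr_x
  nbr_z t h := by rcases c.nbr_z t h with h | h | h | h <;> simp [h]

theorem ne_yu (c : SharedEdgeConfig G x y z w u v) : y ≠ u :=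
  fun h => c.not_adj_uv (h ▸ c.adj_yv)

theorem ne_uv (c : SharedEdgeConfig G x y z w u v) : u ≠ v :=
  fun h => c.not_adj_xv (h ▸ c.adj_xu)

theorem neighborFinset_eq [Fintype V] [DecidableEq V] [DecidableRel G.Adj]
    (c : SharedEdgeConfig G x y z w u v) : G.neighborFinset x = {y, z, w, u} := by
  ext t
  simp only [SimpleGraph.mem_neighborFinset, Finset.mem_insert, Finset.mem_singleton]
  refine ⟨c.nbr_x t, ?_⟩
  rintro (rfl | rfl | rfl | rfl)
  exacts [c.adj_xy, c.adj_xz, c.adj_xw, c.adj_xu]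

theorem inducesC4 [Fintype V] [DecidableEq V] [DecidableRel G.Adj]
    (c : SharedEdgeConfig G x y z w u v) : InducesC4 G (G.neighborFinset x) :=
  ⟨z, y, w, u, c.adj_yz.ne', c.ne_zw, c.adj_zu.ne, c.adj_yw.ne,
    c.ne_yu, c.adj_wu.ne,
    by rw [c.neighborFinset_eq, Finset.insert_comm], c.adj_yz.symm, c.adj_yw, c.adj_wu,
    c.adj_zu.symm, c.not_adj_zw, c.not_adj_yu⟩

variable [DecidableEq V]

theorem maxClique_xyz (c : SharedEdgeConfig G x y z w u v) : MaxClique G {x, y, z} :=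
  maxClique_triple c.adj_xy c.adj_xz c.adj_yz fun t ht hty htz => by
    rcases c.nbr_x t ht with rfl | rfl | rfl | rfl
    exacts [(hty rfl).elim, (htz rfl).elim, .inr fun h => c.not_adj_zw h.symm,
      .inl fun h => c.not_adj_yu h.symm]

theorem maxClique_xyw (c : SharedEdgeConfig G x y z w u v) : MaxClique G {x, y, w} :=
  maxClique_triple c.adj_xy c.adj_xw c.adj_yw fun t ht hty htw => by
    rcases c.nbr_x t ht with rfl | rfl | rfl | rfl
    exacts [(hty rfl).elim, .inr c.not_adj_zw, (htw rfl).elim,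
      .inl fun h => c.not_adj_yu h.symm]

theorem maxClique_xzu (c : SharedEdgeConfig G x y z w u v) : MaxClique G {x, z, u} :=
  maxClique_triple c.adj_xz c.adj_xu c.adj_zu fun t ht htz htu => by
    rcases c.nbr_x t ht with rfl | rfl | rfl | rfl
    exacts [.inr c.not_adj_yu, (htz rfl).elim, .inl fun h => c.not_adj_zw h.symm, (htu rfl).elim]

theorem maxClique_xwu (c : SharedEdgeConfig G x y z w u v) : MaxClique G {x, w, u} :=
  maxClique_triple c.adj_xw c.adj_xu c.adj_wu fun t ht htw htu => by
    rcases c.nbr_x t ht with rfl | rfl | rfl | rfl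
    exacts [.inr c.not_adj_yu, .inl c.not_adj_zw, (htw rfl).elim, (htu rfl).elim]

theorem isNormal (c : SharedEdgeConfig G x y z w u v) : IsNormal G x := by
  refine isNormal_iff.2 fun q hq hmeet => ?_
  by_contra hxq
  have hmeet' : ∀ {a b}, MaxClique G {x, a, b} → a ∈ q ∨ b ∈ q := fun hr => by
    obtain ⟨t, htq, ht⟩ := hmeet _ hr (by simp)
    simp only [Finset.mem_insert, Finset.mem_singleton] at ht
    rcases ht with rfl | rfl | rfl
    exacts [(hxq htq).elim, .inl htq, .inr htq]
  have hzw : ¬ (z ∈ q ∧ w ∈ q) := fun ⟨hz, hw⟩ => c.not_adj_zw (hq.1 hz hw c.ne_zw)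
  have hyu : ¬ (y ∈ q ∧ u ∈ q) := fun ⟨hy, hu⟩ => c.not_adj_yu (hq.1 hy hu c.ne_yu)
  have hxyz := hmeet' c.maxClique_xyz
  have hxyw := hmeet' c.maxClique_xyw
  have hxzu := hmeet' c.maxClique_xzu
  have hxwu := hmeet' c.maxClique_xwu
  tauto

theorem subset_xzu (c : SharedEdgeConfig G x y z w u v) {r : Finset V}
    (hr : G.IsClique (r : Set V)) (hz : z ∈ r) (hy : y ∉ r) (hv : v ∉ r) : r ⊆ {x, z, u} := by
  intro b hb
  by_cases hbz : b = z
  · simp [hbz]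
  rcases c.nbr_z b (hr hz hb (Ne.symm hbz)) with rfl | rfl | rfl | rfl
  exacts [by simp, (hy hb).elim, by simp, (hv hb).elim]

theorem eq_xzu (c : SharedEdgeConfig G x y z w u v) {r : Finset V} (hr : MaxClique G r)
    (hz : z ∈ r) (hy : y ∉ r) (hv : v ∉ r) : r = {x, z, u} :=
  hr.2 _ (isClique_triple c.adj_xz c.adj_xu c.adj_zu) (c.subset_xzu hr.1 hz hy hv)

theorem eq_xyw (c : SharedEdgeConfig G x y z w u v) {r : Finset V} (hr : MaxClique G r)
    (hx : x ∈ r) (hy : y ∈ r) (hz : z ∉ r) : r = {x, y, w} := by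
  refine hr.2 _ (isClique_triple c.adj_xy c.adj_xw c.adj_yw) fun b hb => ?_
  by_cases hbx : b = x
  · simp [hbx]
  rcases c.nbr_x b (hr.1 hx hb (Ne.symm hbx)) with rfl | rfl | rfl | rfl
  exacts [by simp, (hz hb).elim, by simp, (c.not_adj_yu (hr.1 hy hb c.ne_yu)).elim]

theorem not_isNormal_z (c : SharedEdgeConfig G x y z w u v) : ¬ IsNormal G z := by
  intro hz
  have hzT' : z ∉ ({x, y, w} : Finset V) := by simp [c.adj_xz.ne', c.adj_yz.ne', c.ne_zw]
  refine hzT' (isNormal_iff.1 hz _ c.maxClique_xyw fun r hr hzr => ?_)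
  by_cases hx : x ∈ r
  · exact ⟨x, by simp, hx⟩
  by_cases hy : y ∈ r
  · exact ⟨y, by simp, hy⟩
  by_cases hu : u ∈ r
  · have hv : v ∉ r := fun hv => c.not_adj_uv (hr.1 hu hv c.ne_uv)
    exact (hx (c.eq_xzu hr hzr hy hv ▸ by simp)).elim
  · exact (hy (c.symm.eq_xzu hr hzr hx hu ▸ by simp)).elim

theorem not_isInnerTriangle_xzu (c : SharedEdgeConfig G x y z w u v) :
    ¬ IsInnerTriangle G {x, z, u} := by
  intro h
  obtain ⟨t, htT, hzt, hut⟩ := h.exists_common_neighbor (a := z) (b := u) (by simp) (by simp)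
    c.adj_zu.ne
  rcases c.nbr_z t hzt with rfl | rfl | rfl | rfl
  exacts [htT (by simp), c.not_adj_yu hut.symm, htT (by simp), c.not_adj_uv hut]

theorem eq_of_mem_QT (c : SharedEdgeConfig G x y z w u v) {q : Finset V}
    (hq : q ∈ QT G {x, y, z}) (hqT : q ≠ {x, y, z}) :
    q = {x, y, w} ∨ q = {x, z, u} ∨ q = {y, z, v} := by
  obtain ⟨hq, hcard⟩ := hq
  have hT : ¬ (x ∈ q ∧ y ∈ q ∧ z ∈ q) := fun ⟨hx, hy, hz⟩ =>
    hqT (c.maxClique_xyz.2 q hq.1 (by simp [Finset.insert_subset_iff, hx, hy, hz])).symm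
  rcases Finset.mem_and_mem_of_two_le_card_inter hcard with ⟨hx, hy⟩ | ⟨hx, hz⟩ | ⟨hy, hz⟩
  · exact .inl (c.eq_xyw hq hx hy fun hz => hT ⟨hx, hy, hz⟩)
  · refine .inr (.inl (c.eq_xzu hq hz (fun hy => hT ⟨hx, hy, hz⟩) fun hv => ?_))
    exact c.not_adj_xv (hq.1 hx hv c.symm.ne_yu)
  · refine .inr (.inr (c.symm.eq_xzu hq hz (fun hx => hT ⟨hx, hy, hz⟩) fun hu => ?_))
    exact c.not_adj_yu (hq.1 hy hu c.ne_yu)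

end SharedEdgeConfig

theorem sharedEdgeConfig_of_isInnerTriangle [Fintype V] [DecidableEq V] {G : SimpleGraph V}
    [DecidableRel G.Adj] (hconn : G.Connected) (hdeg : ∀ v, G.degree v ≤ 4)
    (hoct : ¬ Nonempty (G ≃g octahedron)) {x y z w : V} (hne : x ≠ y)
    (hT : IsInnerTriangle G {x, y, z}) (hT' : IsInnerTriangle G {x, y, w})
    (hz : z ∉ ({x, y, w} : Finset V)) (hw : w ∉ ({x, y, z} : Finset V)) :
    ∃ u v, SharedEdgeConfig G x y z w u v := by
  obtain ⟨hzx, hzy, hzw⟩ : z ≠ x ∧ z ≠ y ∧ z ≠ w := by simpa using hz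
  obtain ⟨hwx, hwy, -⟩ : w ≠ x ∧ w ≠ y ∧ w ≠ z := by simpa using hw
  have axy : G.Adj x y := hT.1.1 (by simp) (by simp) hne
  have axz : G.Adj x z := hT.1.1 (by simp) (by simp) hzx.symm
  have ayz : G.Adj y z := hT.1.1 (by simp) (by simp) hzy.symm
  have axw : G.Adj x w := hT'.1.1 (by simp) (by simp) hwx.symm
  have ayw : G.Adj y w := hT'.1.1 (by simp) (by simp) hwy.symm
  have nzw : ¬ G.Adj z w := fun h => hT.1.not_adj_of_adj_of_adj hw axw.symm ayw.symm h.symm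
  obtain ⟨u, huT, axu, azu⟩ := hT.exists_common_neighbor (a := x) (b := z) (by simp) (by simp)
    hzx.symm
  obtain ⟨v, hvT, ayv, azv⟩ := hT.exists_common_neighbor (a := y) (b := z) (by simp) (by simp)
    hzy.symm
  have huv : u ≠ v := fun h => hT.1.not_adj_of_adj_of_adj huT axu.symm (h ▸ ayv.symm) azu.symm
  obtain ⟨hux, huy, huz⟩ : u ≠ x ∧ u ≠ y ∧ u ≠ z := by simpa using huT
  obtain ⟨hvx, hvy, hvz⟩ : v ≠ x ∧ v ≠ y ∧ v ≠ z := by simpa using hvT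
  have hNx := SimpleGraph.eq_or_eq_or_eq_or_eq_of_adj (hdeg x) axy axz axw axu hzy.symm
    hwy.symm (Ne.symm huy) hzw (Ne.symm huz) fun h => nzw (h ▸ azu)
  have hNy := SimpleGraph.eq_or_eq_or_eq_or_eq_of_adj (hdeg y) axy.symm ayz ayw ayv hzx.symm
    hwx.symm (Ne.symm hvx) hzw (Ne.symm hvz) fun h => nzw (h ▸ azv)
  have awu : G.Adj w u := hT'.adj_of_forall_adj hwx nzw hNx
  have awv : G.Adj w v := (Finset.insert_comm x y {w} ▸ hT').adj_of_forall_adj hwy nzw hNy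
  have nyu : ¬ G.Adj y u := fun h => by
    rcases hNy u h with h | h | h | h
    exacts [hux h, huz h, nzw (h ▸ azu), huv h]
  have nxv : ¬ G.Adj x v := fun h => by
    rcases hNx v h with h | h | h | h
    exacts [hvy h, hvz h, nzw (h ▸ azv), huv h.symm]
  have hNz := SimpleGraph.eq_or_eq_or_eq_or_eq_of_adj (hdeg z) axz.symm ayz.symm azu azv hne
    (Ne.symm hux) (Ne.symm hvx) (Ne.symm huy) (Ne.symm hvy) huv
  have nuv : ¬ G.Adj u v := fun huv' => hoct <| nonempty_iso_octahedron_of_hom hconn hdeg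
    ⟨fun p => ![![x, v], ![y, u], ![z, w]] p.1 p.2, fun {p q} h => by
      fin_cases p <;> fin_cases q <;> simp_all [octahedron, G.adj_comm]⟩
    fun i => by fin_cases i <;> simp [hvx.symm, huy.symm, hzw]
  exact ⟨u, v, axy, axz, axw, axu, ayz, ayw, ayv, azu, azv, awu, awv, nzw, nxv, nyu, nuv, hzw,
    hNx, hNy, hNz⟩

theorem stmt10 {V : Type u} [Fintype V] [DecidableEq V] (G : SimpleGraph V)
    [DecidableRel G.Adj] (hconn : G.Connected) (hdeg : ∀ v, G.degree v ≤ 4)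
    (hoct : ¬ Nonempty (G ≃g octahedron))
    (T T' : Finset V) (x y : V) (hne : x ≠ y)
    (hT : IsInnerTriangle G T) (hT' : IsInnerTriangle G T')
    (hxy : T ∩ T' = ({x, y} : Finset V)) :
    InducesC4 G (G.neighborFinset x) ∧
    (∀ q ∈ QT G T, q ≠ T → (IsInnerTriangle G q ↔ q = T')) ∧
    (∀ v ∈ T, (IsNormal G v ↔ (v = x ∨ v = y))) := by
  obtain ⟨z, hzT', rfl⟩ := Finset.exists_eq_triple_of_inter_eq hT.2.1 hxy hne
  obtain ⟨w, hwT, rfl⟩ :=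
    Finset.exists_eq_triple_of_inter_eq hT'.2.1 (by rw [Finset.inter_comm, hxy]) hne
  obtain ⟨u, v, c⟩ := sharedEdgeConfig_of_isInnerTriangle hconn hdeg hoct hne hT hT' hzT' hwT
  refine ⟨c.inducesC4, fun q hq hqT => ?_, fun t ht => ?_⟩
  · rcases c.eq_of_mem_QT hq hqT with rfl | rfl | rfl
    · exact iff_of_true hT' rfl
    · exact iff_of_false c.not_isInnerTriangle_xzu fun h => hzT' (h ▸ by simp)
    · exact iff_of_false c.symm.not_isInnerTriangle_xzu fun h => hzT' (h ▸ by simp)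
  · simp only [Finset.mem_insert, Finset.mem_singleton] at ht
    rcases ht with rfl | rfl | rfl
    · exact iff_of_true c.isNormal (.inl rfl)
    · exact iff_of_true c.symm.isNormal (.inr rfl)
    · exact iff_of_false c.not_isNormal_z fun h => hzT' (by rcases h with rfl | rfl <;> simp)
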